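/- If σ is a reasonable strategy that admits no strict improvement (i.e., there is no edge (s,t) ∈ E_0 with V_σ(s) ≺ ℘(s) + V_σ(t)), then V_σ(s) = ∞ for every node s in player 0's winning set W_0 of the underlying parity game. -/

import Mathlib

/-!
Without strict improvements, `𝒱_σ` can only decrease along suitable plays: every player-0 edge
`(u, w)` satisfies `℘(u) + 𝒱_σ(w) ≼ 𝒱_σ(u)`, and so does the first move of an optimal
counter-strategy of player 1 at a player-1 node `u`. Let player 0 follow a winning strategy from
`s ∈ W_0` against these moves. Since `σ` is reasonable, every infinite play of `A_⊥|σ` is won by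
player 0, so `𝒱_σ` is never `-∞`; hence if `𝒱_σ(s) ≺ ∞`, then `𝒱_σ` stays finite along the play.
After the colors above the (even) maximal recurring color `k` have stopped, the play visits some
node `v` of color `k` twice, and telescoping over the cycle between the visits gives
`𝒱_σ(v) + c ≼ 𝒱_σ(v)` for the color profile `c` of that cycle. But `c` vanishes above `k` and is
positive at `k`, so `0 ≺ c`, a contradiction.
-/

open scoped Classical

/-- The order `≺` on integer color profiles `ℤ^d`: compare at the largest index where
they differ; at an even index the larger entry wins, at an odd index the smaller one. -/
def FinLt {d : ℕ} (p q : Fin d → ℤ) : Prop :=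
  ∃ k : Fin d, p k ≠ q k ∧ (∀ j, k < j → p j = q j) ∧
    ((Even (k : ℕ) ∧ p k < q k) ∨ (Odd (k : ℕ) ∧ q k < p k))

/-- Reflexive closure `≼` of `FinLt`. -/
def FinLe {d : ℕ} (p q : Fin d → ℤ) : Prop := p = q ∨ FinLt p q

/-- Color profiles: `ℤ^d` together with `-∞` (`bot`) and `∞` (`top`). -/
inductive Prof (d : ℕ) where
  | bot : Prof d
  | fin : (Fin d → ℤ) → Prof d
  | top : Prof d

/-- The order `≺` on color profiles: `-∞` is the bottom element, `∞` the top element,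
finite profiles are compared by `FinLt`. -/
def Prof.Lt {d : ℕ} : Prof d → Prof d → Prop
  | .bot, .bot => False
  | .bot, .fin _ => True
  | .bot, .top => True
  | .fin _, .bot => False
  | .fin p, .fin q => FinLt p q
  | .fin _, .top => True
  | .top, _ => False

/-- Reflexive closure `≼` of `Prof.Lt`. -/
def Prof.Le {d : ℕ} (p q : Prof d) : Prop := p = q ∨ Prof.Lt p q

/-- Adding a vector in `ℤ^d` to a profile; `±∞` are absorbing. -/
def Prof.add {d : ℕ} : Prof d → (Fin d → ℤ) → Prof d
  | .bot, _ => .bot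
  | .fin p, q => .fin (p + q)
  | .top, _ => .top

/-- A parity game arena: a finite directed graph, each node owned by player 0 or 1 and
colored by a color in `{0,…,d-1}`; every node has at least one successor. -/
structure PGA (V : Type) (d : ℕ) where
  edge : V → V → Prop
  owner : V → Fin 2
  color : V → Fin d
  succ : ∀ v, ∃ w, edge v w

variable {V : Type} {d : ℕ}

/-- The profile `℘(s)` of a single vertex: the unit vector at its color. -/
def unitProf (A : PGA V d) (s : V) : Fin d → ℤ := fun k => if A.color s = k then 1 else 0

/-- The color profile `℘(π)` of a finite sequence of vertices: how often each color occurs. -/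
def listProf (A : PGA V d) (L : List V) : Fin d → ℤ := fun k => ((L.map A.color).count k : ℤ)

/-- `℘(s) + p` for a vertex `s` and a profile `p`. -/
def addV (A : PGA V d) (s : V) (p : Prof d) : Prof d := p.add (unitProf A s)

/-- Edges of the escape arena `A_⊥` over `Option V`, where `none` is the sink `⊥`:
all edges of `A`, plus an edge from every player-0 node to `⊥`; `⊥` has no outgoing edges. -/
def EdgeB (A : PGA V d) : Option V → Option V → Prop
  | some u, some v => A.edge u v
  | some u, none => A.owner u = 0
  | none, _ => False

/-- A (memoryless, possibly non-deterministic) strategy of player 0 in `A_⊥`: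
a set of player-0 edges giving every player-0 node at least one successor. -/
def Strategy0 (A : PGA V d) (σ : V → Option V → Prop) : Prop :=
  (∀ s t, σ s t → A.owner s = 0 ∧ EdgeB A (some s) t) ∧
  (∀ s, A.owner s = 0 → ∃ t, σ s t)

/-- A (memoryless, possibly non-deterministic) strategy of player 1 (who never moves to `⊥`). -/
def Strategy1 (A : PGA V d) (τ : V → V → Prop) : Prop :=
  (∀ s t, τ s t → A.owner s = 1 ∧ A.edge s t) ∧
  (∀ s, A.owner s = 1 → ∃ t, τ s t)

/-- A strategy is deterministic if it picks at most one successor per node. -/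
def Deterministic (σ : V → Option V → Prop) : Prop :=
  ∀ s t t', σ s t → σ s t' → t = t'

/-- Edges of `A_⊥` restricted to a player-0 strategy `σ` that stay inside `V`
(cycles of `A_⊥|σ` never pass through `⊥`). -/
def EdgeSig (A : PGA V d) (σ : V → Option V → Prop) (u v : V) : Prop :=
  (A.owner u = 1 ∧ A.edge u v) ∨ σ u (some v)

/-- A (nonempty) cycle in `A_⊥|σ`: consecutive edges plus the wrap-around edge. -/
def CycleIn (A : PGA V d) (σ : V → Option V → Prop) (L : List V) : Prop :=
  L ≠ [] ∧ List.Chain' (EdgeSig A σ) L ∧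
  ∀ a b, L.head? = some a → L.getLast? = some b → EdgeSig A σ b a

/-- A player-0 strategy is reasonable if `A_⊥|σ` has no 1-dominated cycle,
i.e. on every cycle the dominating (maximal) color is even. -/
def Reasonable (A : PGA V d) (σ : V → Option V → Prop) : Prop :=
  ∀ L, CycleIn A σ L → ∀ v ∈ L, (∀ w ∈ L, A.color w ≤ A.color v) → Even ((A.color v : ℕ))

/-- One step of a play in `A_⊥` with player 0 using `σ` and player 1 using `τ`;
the sink `⊥` is absorbing. -/
def PlayStep (A : PGA V d) (σ : V → Option V → Prop) (τ : V → V → Prop) :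
    Option V → Option V → Prop
  | none, y => y = none
  | some u, y => (A.owner u = 0 ∧ σ u y) ∨ (A.owner u = 1 ∧ ∃ v, y = some v ∧ τ u v)

/-- A play from `s` in `A_⊥|σ,τ` (modelled with absorbing sink). -/
def IsPlay (A : PGA V d) (σ : V → Option V → Prop) (τ : V → V → Prop)
    (s : V) (π : ℕ → Option V) : Prop :=
  π 0 = some s ∧ ∀ n, PlayStep A σ τ (π n) (π (n + 1))

/-- One step of a play in `A_⊥` with player 0 using `σ`, player 1 unconstrained. -/
def PlayStepB (A : PGA V d) (σ : V → Option V → Prop) : Option V → Option V → Prop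
  | none, y => y = none
  | some u, y => (A.owner u = 0 ∧ σ u y) ∨ (A.owner u = 1 ∧ ∃ v, y = some v ∧ A.edge u v)

/-- A play from `s` in `A_⊥|σ` against an arbitrary player 1. -/
def IsPlayB (A : PGA V d) (σ : V → Option V → Prop) (s : V) (π : ℕ → Option V) : Prop :=
  π 0 = some s ∧ ∀ n, PlayStepB A σ (π n) (π (n + 1))

/-- Color `k` occurs at position `n` of the play `π`. -/
def ColorAt (A : PGA V d) (π : ℕ → Option V) (n : ℕ) (k : Fin d) : Prop :=
  ∃ v, π n = some v ∧ A.color v = k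

/-- An infinite play of `A_⊥` (never reaching `⊥`) is won by player 0 iff the maximal color
occurring infinitely often is even. -/
def Won0B (A : PGA V d) (π : ℕ → Option V) : Prop :=
  ∃ k : Fin d, Even ((k : ℕ)) ∧ (∀ N, ∃ n ≥ N, ColorAt A π n k) ∧
    ∀ j : Fin d, k < j → ∃ N, ∀ n ≥ N, ¬ ColorAt A π n j

/-- The value `℘(π)` of a play in `A_⊥`: for a finite play (reaching `⊥`), the color profile
of its vertices; for an infinite play, `∞` if player 0 wins it and `-∞` otherwise. -/
noncomputable def PlayValue (A : PGA V d) (π : ℕ → Option V) : Prof d :=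
  if h : ∃ n, π n = none then
    .fin (fun k =>
      (((Finset.range (Nat.find h)).filter (fun n => ColorAt A π n k)).card : ℤ))
  else if Won0B A π then .top else .bot

/-- `p` is the `≺`-maximum of the set `S` of profiles. -/
def IsMaxOf {d : ℕ} (S : Set (Prof d)) (p : Prof d) : Prop := p ∈ S ∧ ∀ q ∈ S, Prof.Le q p

/-- `p` is the `≺`-minimum of the set `S` of profiles. -/
def IsMinOf {d : ℕ} (S : Set (Prof d)) (p : Prof d) : Prop := p ∈ S ∧ ∀ q ∈ S, Prof.Le p q

/-- `W` is the valuation `𝒱_σ` of the player-0 strategy `σ`: `W(⊥) = ō`, and `W(s)` is the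
`≺`-minimal value player 1 can guarantee (by a memoryless strategy) in any play from `s`
in `A_⊥|σ`. -/
def IsValuation (A : PGA V d) (σ : V → Option V → Prop) (W : Option V → Prof d) : Prop :=
  W none = .fin 0 ∧
  ∀ s : V, IsMinOf
    { p | ∃ τ, Strategy1 A τ ∧
        IsMaxOf { q | ∃ π, IsPlay A σ τ s π ∧ q = PlayValue A π } p }
    (W (some s))

/-- `(s,t)` is an improvement of `σ` w.r.t. the valuation `W`: a player-0 edge with
`W(s) ≼ ℘(s) + W(t)`.  `I_σ` is the set (strategy) of all improvements. -/
def Improvement (A : PGA V d) (W : Option V → Prof d) (s : V) (t : Option V) : Prop :=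
  A.owner s = 0 ∧ EdgeB A (some s) t ∧ Prof.Le (W (some s)) (addV A s (W t))

/-- `(s,t)` is a strict improvement of `σ` w.r.t. `W`: a player-0 edge with
`W(s) ≺ ℘(s) + W(t)`. -/
def StrictImp (A : PGA V d) (W : Option V → Prof d) (s : V) (t : Option V) : Prop :=
  A.owner s = 0 ∧ EdgeB A (some s) t ∧ Prof.Lt (W (some s)) (addV A s (W t))

/-- A memoryless strategy of player 0 in the original parity game arena `A`. -/
def Strat0A (A : PGA V d) (σ : V → V → Prop) : Prop :=
  (∀ s t, σ s t → A.owner s = 0 ∧ A.edge s t) ∧ (∀ s, A.owner s = 0 → ∃ t, σ s t)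

/-- A play in `A` from `s` where player 0 follows `σ` and player 1 is unconstrained. -/
def PlayA (A : PGA V d) (σ : V → V → Prop) (s : V) (π : ℕ → V) : Prop :=
  π 0 = s ∧ ∀ n, (A.owner (π n) = 0 → σ (π n) (π (n + 1))) ∧
    (A.owner (π n) = 1 → A.edge (π n) (π (n + 1)))

/-- Parity winning condition in `A` for player 0: the maximal color seen infinitely often is even. -/
def Won0A (A : PGA V d) (π : ℕ → V) : Prop :=
  ∃ k : Fin d, Even ((k : ℕ)) ∧ (∀ N, ∃ n ≥ N, A.color (π n) = k) ∧
    ∀ j : Fin d, k < j → ∃ N, ∀ n ≥ N, A.color (π n) ≠ j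

/-- Player 0 wins the node `s` of the parity game arena `A` (with a memoryless strategy). -/
def Win0 (A : PGA V d) (s : V) : Prop :=
  ∃ σ, Strat0A A σ ∧ ∀ π, PlayA A σ s π → Won0A A π

/-- An acyclic path of `A_⊥` terminating in `⊥`: pairwise distinct vertices, consecutive
edges of `A`, and the last vertex owned by player 0 (so it has the edge to `⊥`). -/
def AcyclicToBot (A : PGA V d) (L : List V) : Prop :=
  L.Nodup ∧ List.Chain' A.edge L ∧ ∀ b, L.getLast? = some b → A.owner b = 0


open Filter

theorem FinLt.irrefl (p : Fin d → ℤ) : ¬ FinLt p p := fun ⟨_, hk, _⟩ => hk rfl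

theorem FinLt.trans {p q r : Fin d → ℤ} (hpq : FinLt p q) (hqr : FinLt q r) : FinLt p r := by
  obtain ⟨k, hk, habove, hpar⟩ := hpq
  obtain ⟨l, hl, habove', hpar'⟩ := hqr
  rcases lt_trichotomy k l with hkl | rfl | hlk
  · refine ⟨l, by rwa [habove l hkl], fun j hj => ?_, by rwa [habove l hkl]⟩
    rw [habove j (hkl.trans hj), habove' j hj]
  · refine ⟨k, ?_, fun j hj => (habove j hj).trans (habove' j hj), ?_⟩ <;>
      rcases Nat.even_or_odd (k : ℕ) with he | ho <;>
      grind [Nat.not_even_iff_odd]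
  · refine ⟨k, by rwa [← habove' k hlk], fun j hj => ?_, by rwa [← habove' k hlk]⟩
    rw [habove j hj, habove' j (hlk.trans hj)]

theorem finLt_or_finLt_of_ne {p q : Fin d → ℤ} (h : p ≠ q) : FinLt p q ∨ FinLt q p := by
  obtain ⟨k, hk, hmax⟩ : ∃ k, p k ≠ q k ∧ ∀ j, k < j → p j = q j := by
    have hne : (Finset.univ.filter fun k => p k ≠ q k).Nonempty := by
      by_contra hc
      exact h (funext fun k => by by_contra hk; exact hc ⟨k, by simpa using hk⟩)
    refine ⟨_, (Finset.mem_filter.mp (Finset.max'_mem _ hne)).2, fun j hj => ?_⟩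
    by_contra hne'
    exact (Finset.le_max' _ j (by simpa using hne')).not_gt hj
  rcases Nat.even_or_odd (k : ℕ) with he | ho <;> rcases hk.lt_or_gt with hlt | hgt
  · exact .inl ⟨k, hk, hmax, .inl ⟨he, hlt⟩⟩
  · exact .inr ⟨k, hk.symm, fun j hj => (hmax j hj).symm, .inl ⟨he, hgt⟩⟩
  · exact .inr ⟨k, hk.symm, fun j hj => (hmax j hj).symm, .inr ⟨ho, hlt⟩⟩
  · exact .inl ⟨k, hk, hmax, .inr ⟨ho, hgt⟩⟩

theorem FinLt.add_right {p q : Fin d → ℤ} (h : FinLt p q) (c : Fin d → ℤ) :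
    FinLt (p + c) (q + c) := by
  obtain ⟨k, hk, habove, hpar⟩ := h
  exact ⟨k, by simpa using hk, fun j hj => by simp [habove j hj], by simpa using hpar⟩

theorem finLt_add_right_iff {p q c : Fin d → ℤ} : FinLt (p + c) (q + c) ↔ FinLt p q :=
  ⟨fun h => by simpa using h.add_right (-c), fun h => h.add_right c⟩

theorem FinLt.not_finLe {p q : Fin d → ℤ} (h : FinLt p q) : ¬ FinLe q p := by
  rintro (rfl | h')
  exacts [FinLt.irrefl _ h, FinLt.irrefl _ (h.trans h')]

theorem not_finLt_iff {p q : Fin d → ℤ} : ¬ FinLt p q ↔ FinLe q p := by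
  refine ⟨fun h => ?_, fun h h' => h'.not_finLe h⟩
  by_cases hqp : q = p
  · exact .inl hqp
  · exact .inr ((finLt_or_finLt_of_ne hqp).resolve_right h)

namespace Prof

theorem Le.trans {p q r : Prof d} (hpq : p.Le q) (hqr : q.Le r) : p.Le r := by
  rcases hpq with rfl | hpq
  · exact hqr
  rcases hqr with rfl | hqr
  · exact .inr hpq
  right
  cases p <;> cases q <;> cases r <;> first | trivial | exact FinLt.trans hpq hqr

theorem fin_le_fin {p q : Fin d → ℤ} : (Prof.fin p).Le (.fin q) ↔ FinLe p q := by
  simp [Prof.Le, FinLe, Prof.Lt]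

theorem eq_top_of_top_le {p : Prof d} (h : Prof.top.Le p) : p = .top := by
  rcases h with h | h
  · exact h.symm
  · cases p <;> exact h.elim

theorem le_of_not_lt {p q : Prof d} (h : ¬ p.Lt q) : q.Le p := by
  cases p <;> cases q <;> simp_all [Prof.Le, Prof.Lt, not_finLt_iff, FinLe]

theorem add_add (p : Prof d) (a b : Fin d → ℤ) : (p.add a).add b = p.add (a + b) := by
  cases p <;> simp [Prof.add, add_assoc]

theorem add_zero (p : Prof d) : p.add 0 = p := by
  cases p <;> simp [Prof.add]

theorem Le.add_right {p q : Prof d} (h : p.Le q) (c : Fin d → ℤ) : (p.add c).Le (q.add c) := by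
  cases p <;> cases q <;> simp_all [Prof.Le, Prof.Lt, Prof.add, finLt_add_right_iff]

theorem le_of_add_le_add_right {p q : Prof d} {c : Fin d → ℤ} (h : (p.add c).Le (q.add c)) :
    p.Le q := by
  cases p <;> cases q <;> simp_all [Prof.Le, Prof.Lt, Prof.add, finLt_add_right_iff]

theorem exists_eq_fin {p : Prof d} (hbot : p ≠ .bot) (htop : p ≠ .top) :
    ∃ q, p = .fin q := by
  cases p
  exacts [absurd rfl hbot, ⟨_, rfl⟩, absurd rfl htop]

theorem add_sum_Ico_le {P : ℕ → Prof d} {c : ℕ → Fin d → ℤ}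
    (h : ∀ n, ((P (n + 1)).add (c n)).Le (P n)) {m n : ℕ} (hmn : m ≤ n) :
    ((P n).add (∑ i ∈ Finset.Ico m n, c i)).Le (P m) := by
  induction n, hmn using Nat.le_induction with
  | base => simpa [Prof.add_zero] using .inl rfl
  | succ n hmn ih =>
    rw [Finset.sum_Ico_succ_top hmn, add_comm _ (c n), ← add_add]
    exact ((h n).add_right _).trans ih

end Prof

theorem won0B_iff (A : PGA V d) (π : ℕ → Option V) :
    Won0B A π ↔ ∃ k : Fin d, Even (k : ℕ) ∧ (∃ᶠ n in atTop, ColorAt A π n k) ∧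
      ∀ j, k < j → ∀ᶠ n in atTop, ¬ ColorAt A π n j := by
  simp only [Won0B, frequently_atTop, eventually_atTop, ge_iff_le]

theorem won0B_tail_iff (A : PGA V d) (π : ℕ → Option V) :
    Won0B A (fun n => π (n + 1)) ↔ Won0B A π := by
  have h := map_add_atTop_eq_nat 1
  simp only [won0B_iff, ColorAt]
  conv_rhs => rw [← h]
  simp only [frequently_map, eventually_map]

theorem playValue_eq_addV_tail (A : PGA V d) {π : ℕ → Option V} {u : V} (h0 : π 0 = some u) :
    PlayValue A π = addV A u (PlayValue A (fun n => π (n + 1))) := by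
  by_cases h : ∃ n, π n = none
  · have h' : ∃ n, π (n + 1) = none := by
      obtain ⟨_ | n, hn⟩ := h
      · simp [h0] at hn
      · exact ⟨n, hn⟩
    rw [PlayValue, dif_pos h, PlayValue, dif_pos h', addV, Prof.add,
      Nat.find_comp_succ h h' (by simp [h0])]
    congr 1
    funext k
    have hc0 : ColorAt A π 0 k ↔ A.color u = k := by simp [ColorAt, h0]
    simp only [Finset.card_filter, Finset.sum_range_succ', Pi.add_apply, unitProf, hc0]
    push_cast
    rfl
  · have h' : ¬ ∃ n, π (n + 1) = none := fun ⟨n, hn⟩ => h ⟨n + 1, hn⟩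
    rw [PlayValue, dif_neg h, PlayValue, dif_neg h', won0B_tail_iff]
    split_ifs <;> rfl

theorem exists_frequently_eq_eventually_le {α : Type*} [LinearOrder α] [Finite α] (g : ℕ → α) :
    ∃ k, (∃ᶠ n in atTop, g n = k) ∧ ∀ᶠ n in atTop, g n ≤ k := by
  set S := {a | ∃ᶠ n in atTop, g n = a}
  have hS : ∀ᶠ n in atTop, g n ∈ S := by
    have hrare : ∀ a : {a // a ∉ S}, ∀ᶠ n in atTop, g n ≠ a := fun a => not_frequently.1 a.2
    filter_upwards [eventually_all.2 hrare] with n hn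
    by_contra h
    exact hn ⟨g n, h⟩ rfl
  obtain ⟨n, hn⟩ := hS.exists
  obtain ⟨k, hk, hmax⟩ := S.exists_max_image id S.toFinite ⟨g n, hn⟩
  exact ⟨k, hk, hS.mono fun n hn => hmax _ hn⟩

theorem exists_lt_eq_of_eventually_of_frequently {β : Type*} [Finite β] (f : ℕ → β)
    {P Q : ℕ → Prop} (hP : ∀ᶠ n in atTop, P n) (hQ : ∃ᶠ n in atTop, Q n) :
    ∃ m n, m < n ∧ f m = f n ∧ Q m ∧ ∀ i, m ≤ i → P i := by
  obtain ⟨N, hN⟩ := eventually_atTop.1 hP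
  have hinf : {n | N ≤ n ∧ Q n}.Infinite :=
    Nat.frequently_atTop_iff_infinite.1 ((hQ.and_eventually (eventually_ge_atTop N)).mono
      fun _ h => ⟨h.2, h.1⟩)
  obtain ⟨m, ⟨hNm, hm⟩, n, -, hmn, hf⟩ :=
    hinf.exists_lt_map_eq_of_mapsTo (Set.mapsTo_univ f _) Set.finite_univ
  exact ⟨m, n, hmn, hf, hm, fun i hi => hN i (hNm.trans hi)⟩

theorem cycleIn_map_range' (A : PGA V d) (σ : V → Option V → Prop) {f : ℕ → V}
    (hE : ∀ n, EdgeSig A σ (f n) (f (n + 1))) {m l : ℕ} (hf : f (m + l + 1) = f m) :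
    CycleIn A σ ((List.range' m (l + 1)).map f) := by
  refine ⟨by simp, ?_, ?_⟩
  · exact (List.isChain_map f).2 <|
      (List.isChain_range' m (l + 1) 1).imp fun a b (h : b = a + 1) => h ▸ hE a
  · have hlast : ((List.range' m (l + 1)).map f).getLast? = some (f (m + l)) := by
      simp [List.range'_concat]
    rintro a b ha hb
    simp only [hlast, Option.some_inj] at hb
    simp only [List.head?_map, List.head?_range', Nat.add_one_ne_zero, if_false, Option.map_some,
      Option.some_inj] at ha
    simpa [← ha, ← hb, hf] using hE (m + l)

theorem won0B_of_reasonable (A : PGA V d) {σ : V → Option V → Prop} [Finite V]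
    (hreas : Reasonable A σ) {f : ℕ → V} (hE : ∀ n, EdgeSig A σ (f n) (f (n + 1))) :
    Won0B A (fun n => some (f n)) := by
  obtain ⟨k, hfreq, hle⟩ := exists_frequently_eq_eventually_le fun n => A.color (f n)
  obtain ⟨m, n, hmn, hf, hkm, hbound⟩ := exists_lt_eq_of_eventually_of_frequently f hle hfreq
  obtain ⟨l, rfl⟩ : ∃ l, n = m + l + 1 := ⟨n - m - 1, by omega⟩
  have heven : Even (k : ℕ) := by
    refine hkm ▸ hreas _ (cycleIn_map_range' A σ hE hf.symm) (f m)
      (by simpa using ⟨m, by omega, rfl⟩) fun w hw => ?_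
    obtain ⟨i, hi, rfl⟩ := List.mem_map.1 hw
    exact hkm ▸ hbound i (List.mem_range'_1.1 hi).1
  refine (won0B_iff A _).2 ⟨k, heven, by simpa [ColorAt] using hfreq, fun j hj => ?_⟩
  filter_upwards [hle] with n hn
  simpa [ColorAt] using (hn.trans_lt hj).ne

theorem edgeSig_of_playStep (A : PGA V d) {σ : V → Option V → Prop} {τ : V → V → Prop}
    (hτ : Strategy1 A τ) {u v : V} (h : PlayStep A σ τ (some u) (some v)) : EdgeSig A σ u v := by
  rcases h with ⟨-, h⟩ | ⟨hu, w, hw, hτw⟩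
  · exact .inr h
  · exact .inl ⟨hu, Option.some_inj.1 hw ▸ (hτ.1 u w hτw).2⟩

theorem playValue_ne_bot (A : PGA V d) [Finite V] {σ : V → Option V → Prop} {τ : V → V → Prop}
    (hreas : Reasonable A σ) (hτ : Strategy1 A τ) {s : V} {π : ℕ → Option V}
    (hπ : IsPlay A σ τ s π) : PlayValue A π ≠ .bot := by
  rw [PlayValue]
  split_ifs with hfin hwon
  · simp
  · simp
  · refine absurd ?_ hwon
    choose f hf using fun n => Option.ne_none_iff_exists'.1 fun h => hfin ⟨n, h⟩
    obtain rfl : π = fun n => some (f n) := funext hf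
    exact won0B_of_reasonable A hreas fun n => edgeSig_of_playStep A hτ (hπ.2 n)

theorem IsValuation.ne_bot [Finite V] {A : PGA V d} {σ : V → Option V → Prop}
    {W : Option V → Prof d} (hV : IsValuation A σ W) (hreas : Reasonable A σ) (v : V) :
    W (some v) ≠ .bot := by
  obtain ⟨τ, hτ, ⟨π, hπ, hval⟩, -⟩ := (hV.2 v).1
  exact hval ▸ playValue_ne_bot A hreas hτ hπ

theorem IsValuation.exists_edge_addV_le {A : PGA V d} {σ : V → Option V → Prop}
    {W : Option V → Prof d} (hV : IsValuation A σ W) {u : V} (hu : A.owner u = 1) :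
    ∃ w, A.edge u w ∧ (addV A u (W (some w))).Le (W (some u)) := by
  obtain ⟨τ, hτ, ⟨π, hπ, hval⟩, hmax⟩ := (hV.2 u).1
  obtain ⟨w, hw, hτw⟩ : ∃ w, π 1 = some w ∧ τ u w := by
    have h := hπ.2 0
    rw [hπ.1] at h
    rcases h with ⟨h0, -⟩ | ⟨-, w, hw, hτw⟩
    · simp [hu] at h0
    · exact ⟨w, hw, hτw⟩
  -- Prepending `u` to a play from `w` shows that the tail of an optimal play is optimal from `w`.
  have hcons : ∀ ρ, IsPlay A σ τ w ρ →
      IsPlay A σ τ u (fun | 0 => some u | n + 1 => ρ n) := by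
    rintro ρ ⟨hρ0, hρ⟩
    refine ⟨rfl, fun | 0 => .inr ⟨hu, w, hρ0, hτw⟩ | n + 1 => hρ n⟩
  have htail : IsMaxOf {q | ∃ ρ, IsPlay A σ τ w ρ ∧ q = PlayValue A ρ}
      (PlayValue A fun n => π (n + 1)) := by
    refine ⟨⟨_, ⟨hw, fun n => hπ.2 (n + 1)⟩, rfl⟩, ?_⟩
    rintro _ ⟨ρ, hρ, rfl⟩
    have h := hmax _ ⟨_, hcons ρ hρ, rfl⟩
    rw [playValue_eq_addV_tail A rfl, hval, playValue_eq_addV_tail A hπ.1] at h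
    exact Prof.le_of_add_le_add_right h
  refine ⟨w, (hτ.1 u w hτw).2, ?_⟩
  rw [hval, playValue_eq_addV_tail A hπ.1]
  exact ((hV.2 w).2 _ ⟨τ, hτ, htail⟩).add_right _

theorem addV_le_of_not_strictImp {A : PGA V d} {W : Option V → Prof d} {u w : V}
    (hno : ¬ StrictImp A W u (some w)) (hu : A.owner u = 0) (hw : A.edge u w) :
    (addV A u (W (some w))).Le (W (some u)) :=
  Prof.le_of_not_lt fun h => hno ⟨hu, hw, h⟩

theorem finLt_zero_sum_unitProf (A : PGA V d) {ι : Type*} {s : Finset ι} {g : ι → V} {k : Fin d}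
    (hk : Even (k : ℕ)) (hle : ∀ i ∈ s, A.color (g i) ≤ k) (hmem : ∃ i ∈ s, A.color (g i) = k) :
    FinLt 0 (∑ i ∈ s, unitProf A (g i)) := by
  have hpos : 0 < ∑ i ∈ s, unitProf A (g i) k :=
    Finset.sum_pos' (fun i _ => by unfold unitProf; split_ifs <;> simp)
      (hmem.imp fun i ⟨hi, hik⟩ => ⟨hi, by simp [unitProf, hik]⟩)
  refine ⟨k, by simpa using hpos.ne, fun j hj => ?_, .inl ⟨hk, by simpa using hpos⟩⟩
  simp only [Pi.zero_apply, Finset.sum_apply]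
  exact (Finset.sum_eq_zero fun i hi => if_neg ((hle i hi).trans_lt hj).ne).symm

theorem eventually_le_of_forall_gt_eventually_ne {α : Type*} [LinearOrder α] [Finite α]
    {g : ℕ → α} {k : α} (h : ∀ j, k < j → ∃ N, ∀ n ≥ N, g n ≠ j) :
    ∀ᶠ n in atTop, g n ≤ k := by
  have hj : ∀ j, ∀ᶠ n in atTop, k < j → g n ≠ j := by
    intro j
    by_cases hkj : k < j
    · exact (eventually_atTop.2 (h j hkj)).mono fun _ hn _ => hn
    · exact .of_forall fun _ hkj' => absurd hkj' hkj
  filter_upwards [eventually_all.2 hj] with n hn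
  exact not_lt.1 fun hlt => hn _ hlt rfl

theorem not_won0A_of_forall_addV_le (A : PGA V d) [Finite V] {W : V → Prof d}
    (hbot : ∀ v, W v ≠ .bot) {π : ℕ → V} (htop : W (π 0) ≠ .top)
    (hπ : ∀ n, (addV A (π n) (W (π (n + 1)))).Le (W (π n))) : ¬ Won0A A π := by
  rintro ⟨k, hk, hfreq, hfin⟩
  obtain ⟨m, n, hmn, hπmn, hkm, hbound⟩ := exists_lt_eq_of_eventually_of_frequently π
    (eventually_le_of_forall_gt_eventually_ne hfin) (frequently_atTop.2 hfreq)
  have hdesc {i j : ℕ} (hij : i ≤ j) :=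
    Prof.add_sum_Ico_le (P := fun n => W (π n)) (c := fun n => unitProf A (π n)) hπ hij
  have hntop : W (π m) ≠ .top := fun h =>
    htop (Prof.eq_top_of_top_le (by simpa [h, Prof.add] using hdesc (Nat.zero_le m)))
  obtain ⟨p, hp⟩ := Prof.exists_eq_fin (hbot _) hntop
  have hcycle := hdesc hmn.le
  simp only [← hπmn, hp, Prof.add, Prof.fin_le_fin] at hcycle
  have hpos := finLt_zero_sum_unitProf A hk (fun i hi => hbound i (Finset.mem_Ico.1 hi).1)
    ⟨m, Finset.mem_Ico.2 ⟨le_rfl, hmn⟩, hkm⟩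
  exact (by simpa [add_comm] using hpos.add_right p : FinLt p _).not_finLe hcycle

theorem exists_playA_of_forall_exists (A : PGA V d) {ς : V → V → Prop} {R : V → V → Prop}
    (h : ∀ u, ∃ w, (A.owner u = 0 → ς u w) ∧ (A.owner u = 1 → A.edge u w) ∧ R u w) (s : V) :
    ∃ π, PlayA A ς s π ∧ ∀ n, R (π n) (π (n + 1)) := by
  choose next hnext using h
  refine ⟨fun n => next^[n] s, ⟨rfl, fun n => ?_⟩, fun n => ?_⟩ <;>
    simp only [Function.iterate_succ_apply']
  exacts [⟨(hnext _).1, (hnext _).2.1⟩, (hnext _).2.2]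

theorem exists_succ_addV_le {A : PGA V d} {σ : V → Option V → Prop}
    {W : Option V → Prof d} (hV : IsValuation A σ W) (hno : ∀ s t, ¬ StrictImp A W s t)
    {ς : V → V → Prop} (hς : Strat0A A ς) (u : V) :
    ∃ w, (A.owner u = 0 → ς u w) ∧ (A.owner u = 1 → A.edge u w) ∧
      (addV A u (W (some w))).Le (W (some u)) := by
  obtain hu | hu : A.owner u = 0 ∨ A.owner u = 1 := by omega
  · obtain ⟨w, hw⟩ := hς.2 u hu
    exact ⟨w, fun _ => hw, by simp [hu],
      addV_le_of_not_strictImp (hno u (some w)) hu (hς.1 u w hw).2⟩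
  · obtain ⟨w, hw, hle⟩ := hV.exists_edge_addV_le hu
    exact ⟨w, by simp [hu], fun _ => hw, hle⟩

theorem no_strict_improvement_wins_W0_general {V : Type} {d : ℕ} [Fintype V] (A : PGA V d)
    (σ : V → Option V → Prop) (Vσ : Option V → Prof d)
    (hreas : Reasonable A σ) (hV : IsValuation A σ Vσ)
    (hno : ∀ s t, ¬ StrictImp A Vσ s t) :
    ∀ s : V, Win0 A s → Vσ (some s) = .top := by
  rintro s ⟨ς, hς, hwin⟩
  by_contra htop
  obtain ⟨π, hπ, hdesc⟩ := exists_playA_of_forall_exists A (exists_succ_addV_le hV hno hς) s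
  exact not_won0A_of_forall_addV_le A (W := fun v => Vσ (some v)) (hV.ne_bot hreas)
    (hπ.1 ▸ htop) hdesc (hwin π hπ)

/-- **Lemma 3, contrapositive form.** If a reasonable strategy `σ` admits
no strict improvement, then `𝒱_σ(s) = ∞` for every node `s` in player 0's winning set
`W_0` of the underlying parity game. -/
theorem no_strict_improvement_wins_W0 {V : Type} {d : ℕ} [Fintype V] (A : PGA V d)
    (σ : V → Option V → Prop) (Vσ : Option V → Prof d)
    (hσ : Strategy0 A σ) (hreas : Reasonable A σ) (hV : IsValuation A σ Vσ)
    (hno : ∀ s t, ¬ StrictImp A Vσ s t) :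
    ∀ s : V, Win0 A s → Vσ (some s) = .top :=
  no_strict_improvement_wins_W0_general A σ Vσ hreas hV hno
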